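/- Assume that X is locally compact and that μ is locally doubling and supports a local p-Poincaré inequality. Then X is locally quasiconvex: for every x0 ∈ X there are r0, L > 0 (depending on x0) such that every pair of points x, y ∈ B(x0,r0) can be connected by a curve in X of length at most L d(x,y). If X is moreover proper and connected, then X is semilocally quasiconvex: for every ball B(x0,r0) there is L > 0 (depending on the ball) such that every pair of points x, y ∈ B(x0,r0) can be connected by a curve in X of length at most L d(x,y). -/

import Mathlib

open MeasureTheory Metric Set ENNReal NNReal Filter

noncomputable def erealAbsE (x : EReal) : ℝ≥0∞ :=
  if x = ⊤ ∨ x = ⊥ then ⊤ else ENNReal.ofReal |x.toReal|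

def IsUnitSpeedCurve {Y : Type*} [PseudoMetricSpace Y] (γ : ℝ → Y) (l : ℝ) : Prop :=
  0 < l ∧ ContinuousOn γ (Set.Icc 0 l) ∧
    ∀ a b : ℝ, 0 ≤ a → a ≤ b → b ≤ l →
      eVariationOn γ (Set.Icc a b) = ENNReal.ofReal (b - a)

def IsUpperGradient {Y : Type*} [PseudoMetricSpace Y] [MeasurableSpace Y]
    (g : Y → ℝ≥0∞) (f : Y → EReal) : Prop :=
  Measurable g ∧
    ∀ (γ : ℝ → Y) (l : ℝ), IsUnitSpeedCurve γ l →
      erealAbsE (f (γ 0) - f (γ l)) ≤ ∫⁻ t in Set.Icc 0 l, g (γ t) ∂volume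

def DoublingWithin {Y : Type*} [MetricSpace Y] [MeasurableSpace Y]
    (μ : Measure Y) (x0 : Y) (r0 : ℝ) (C : ℝ≥0) : Prop :=
  ∀ (x : Y) (r : ℝ), 0 < r → ball x r ⊆ ball x0 r0 →
    μ (ball x (2 * r)) ≤ (C : ℝ≥0∞) * μ (ball x r)

def BallsPosFinite {Y : Type*} [MetricSpace Y] [MeasurableSpace Y] (μ : Measure Y) : Prop :=
  ∀ (x : Y) (r : ℝ), 0 < r → 0 < μ (ball x r) ∧ μ (ball x r) < ⊤

def PoincareBall {Y : Type*} [MetricSpace Y] [MeasurableSpace Y]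
    (μ : Measure Y) (q p : ℝ) (x : Y) (r : ℝ) (C lam : ℝ) : Prop :=
  ∀ (u : Y → ℝ) (g : Y → ℝ≥0∞),
    IntegrableOn u (ball x (lam * r)) μ →
    IsUpperGradient g (fun y => (u y : EReal)) →
    ((∫⁻ y in ball x r,
        ENNReal.ofReal |u y - ⨍ z in ball x r, u z ∂μ| ^ q ∂μ) / μ (ball x r)) ^ (1/q)
      ≤ ENNReal.ofReal (C * r) *
        ((∫⁻ y in ball x (lam * r), g y ^ p ∂μ) / μ (ball x (lam * r))) ^ (1/p)

def PoincareWithin {Y : Type*} [MetricSpace Y] [MeasurableSpace Y]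
    (μ : Measure Y) (q p : ℝ) (x0 : Y) (r0 : ℝ) (C lam : ℝ) : Prop :=
  ∀ (x : Y) (r : ℝ), 0 < r → ball x r ⊆ ball x0 r0 → PoincareBall μ q p x r C lam

def GloballyDoublingWith (N : ℕ) (Y : Type*) [PseudoMetricSpace Y] : Prop :=
  ∀ (x : Y) (r : ℝ), 0 < r → ∃ s : Finset Y, s.card ≤ N ∧
    ball x r ⊆ ⋃ y ∈ s, ball y (r / 2)

def GloballyDoubling (Y : Type*) [PseudoMetricSpace Y] : Prop :=
  ∃ N : ℕ, GloballyDoublingWith N Y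

noncomputable def newtonianNorm {Y : Type*} [PseudoMetricSpace Y] [MeasurableSpace Y]
    (μ : Measure Y) (p : ℝ) (f : Y → EReal) : ℝ≥0∞ :=
  ((∫⁻ y, erealAbsE (f y) ^ p ∂μ) +
    ⨅ g ∈ {g : Y → ℝ≥0∞ | IsUpperGradient g f}, ∫⁻ y, g y ^ p ∂μ) ^ (1/p)

noncomputable def newtonianNormOn {X : Type*} [MetricSpace X] [MeasurableSpace X]
    (μ : Measure X) (p : ℝ) (E : Set X) (f : X → EReal) : ℝ≥0∞ :=
  newtonianNorm (μ.comap (Subtype.val : E → X)) p (fun y : E => f y)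

def MemN1p {X : Type*} [MetricSpace X] [MeasurableSpace X]
    (μ : Measure X) (p : ℝ) (f : X → EReal) : Prop :=
  Measurable f ∧ newtonianNorm μ p f < ⊤

def MemN1pLoc {X : Type*} [MetricSpace X] [MeasurableSpace X]
    (μ : Measure X) (p : ℝ) (f : X → EReal) : Prop :=
  Measurable f ∧ ∀ x : X, ∃ (c : X) (r : ℝ), 0 < r ∧ x ∈ ball c r ∧
    newtonianNormOn μ p (ball c r) f < ⊤

noncomputable def sobolevCapacity {X : Type*} [MetricSpace X] [MeasurableSpace X]
    (μ : Measure X) (p : ℝ) (E : Set X) : ℝ≥0∞ :=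
  ⨅ u ∈ {u : X → EReal | Measurable u ∧ ∀ x ∈ E, u x = 1},
    newtonianNorm μ p u ^ p

def ConnectsInWithLength {Y : Type*} [PseudoMetricSpace Y]
    (γ : ℝ → Y) (x y : Y) (A : Set Y) (ℓ : ℝ≥0∞) : Prop :=
  ContinuousOn γ (Set.Icc 0 1) ∧ γ 0 = x ∧ γ 1 = y ∧
    (∀ t ∈ Set.Icc (0:ℝ) 1, γ t ∈ A) ∧ eVariationOn γ (Set.Icc 0 1) ≤ ℓ

/-!
For `ε > 0` let `chainDist ε x y` be the infimum of the lengths of `ε`-chains from `x` to `y`.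
Truncations of `chainDist ε x ·` are continuous, bounded and have upper gradient `1`, so the
Poincaré inequality, telescoped along dyadic balls with the help of the doubling condition, gives
`chainDist ε x y ≤ L * dist x y` near every point, uniformly in `ε`. Almost minimal chains,
parametrised by arclength, converge along an ultrafilter in a compact ball to an
`L * dist x y`-Lipschitz curve on `[0, 1]`. In a connected space the supremum over `ε` of
`chainDist ε` is finite, and compactness of closed balls turns the local bound into a uniform one.
-/

open Topology

section Average

variable {α : Type*} [MeasurableSpace α] {μ : Measure α} {s t : Set α} {u : α → ℝ}

theorem abs_setAverage_sub_le (hs0 : μ s ≠ 0) (hs : μ s ≠ ∞) (hu : IntegrableOn u s μ)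
    {c η : ℝ} (h : ∀ y ∈ s, |u y - c| ≤ η) : |⨍ y in s, u y ∂μ - c| ≤ η := by
  obtain ⟨a, ha, hau⟩ := exists_le_setAverage hs0 hs hu
  obtain ⟨b, hb, hbu⟩ := exists_setAverage_le hs0 hs hu
  have := abs_sub_le_iff.1 (h a ha)
  have := abs_sub_le_iff.1 (h b hb)
  exact abs_sub_le_iff.2 ⟨by linarith, by linarith⟩

theorem abs_setAverage_sub_setAverage_le (hst : s ⊆ t) (hs0 : μ s ≠ 0) (ht : μ t ≠ ∞)
    (hu : IntegrableOn u t μ) :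
    |⨍ y in s, u y ∂μ - ⨍ y in t, u y ∂μ| ≤
      (∫ y in t, |u y - ⨍ z in t, u z ∂μ| ∂μ) / μ.real s := by
  set c := ⨍ z in t, u z ∂μ
  have hs : μ s ≠ ∞ := ne_top_of_le_ne_top ht (measure_mono hst)
  have hpos : 0 < μ.real s := ENNReal.toReal_pos hs0 hs
  have hmean : μ.real s * (⨍ y in s, u y ∂μ - c) = ∫ y in s, (u y - c) ∂μ := by
    rw [integral_sub (hu.mono_set hst) (integrableOn_const hs), setIntegral_const, smul_eq_mul,
      mul_sub, ← smul_eq_mul, measure_smul_setAverage _ hs]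
  rw [le_div_iff₀ hpos, ← abs_of_pos hpos, ← abs_mul, mul_comm, hmean]
  calc |∫ y in s, (u y - c) ∂μ| ≤ ∫ y in s, |u y - c| ∂μ := by
        simpa only [Real.norm_eq_abs] using norm_integral_le_integral_norm (fun y => u y - c)
    _ ≤ ∫ y in t, |u y - c| ∂μ :=
        setIntegral_mono_set (hu.sub (integrableOn_const ht)).abs
          (ae_of_all _ fun _ => abs_nonneg _) hst.eventuallyLE

end Average

section Poincare

variable {X : Type*} [MetricSpace X] [MeasurableSpace X] {μ : Measure X} {u : X → ℝ}
  {p C lam r R : ℝ} {w x0 : X} {D : ℝ≥0}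

theorem DoublingWithin.mono (h : DoublingWithin μ x0 R D) (hr : r ≤ R) :
    DoublingWithin μ x0 r D :=
  fun x t ht hsub => h x t ht (hsub.trans (ball_subset_ball hr))

theorem PoincareWithin.mono {q : ℝ} (h : PoincareWithin μ q p x0 R C lam) (hr : r ≤ R) :
    PoincareWithin μ q p x0 r C lam :=
  fun x t ht hsub => h x t ht (hsub.trans (ball_subset_ball hr))

theorem tendsto_setAverage_ball (hμ : BallsPosFinite μ) (hu : ∀ r, IntegrableOn u (ball w r) μ)
    (hcont : ContinuousAt u w) :
    Tendsto (fun r => ⨍ y in ball w r, u y ∂μ) (𝓝[>] 0) (𝓝 (u w)) := by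
  refine Metric.tendsto_nhds.2 fun η hη => ?_
  obtain ⟨δ, hδ, hδu⟩ := Metric.continuousAt_iff.1 hcont (η / 2) (half_pos hη)
  filter_upwards [Ioo_mem_nhdsGT hδ] with r hr
  refine lt_of_le_of_lt ?_ (half_lt_self hη)
  exact abs_setAverage_sub_le (hμ w r hr.1).1.ne' (hμ w r hr.1).2.ne (hu r)
    fun y hy => (hδu ((mem_ball.1 hy).trans hr.2)).le

theorem PoincareBall.integral_abs_sub_setAverage_le (h : PoincareBall μ 1 p w r C lam)
    (hμ : BallsPosFinite μ) (hr : 0 < r) (hC : 0 ≤ C) (hlam : 0 < lam)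
    (hu : ∀ r, IntegrableOn u (ball w r) μ)
    (hg : IsUpperGradient (fun _ => 1) fun y => (u y : EReal)) :
    ∫ y in ball w r, |u y - ⨍ z in ball w r, u z ∂μ| ∂μ ≤ C * r * μ.real (ball w r) := by
  obtain ⟨hB0, hBtop⟩ := hμ w r hr
  obtain ⟨hL0, hLtop⟩ := hμ w (lam * r) (mul_pos hlam hr)
  have H := h u _ (hu _) hg
  simp only [ENNReal.rpow_one, ENNReal.one_rpow, div_one, setLIntegral_one,
    ENNReal.div_self hL0.ne' hLtop.ne, mul_one] at H
  rw [ENNReal.div_le_iff hB0.ne' hBtop.ne] at H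
  have hm : AEStronglyMeasurable (fun y => |u y - ⨍ z in ball w r, u z ∂μ|)
      (μ.restrict (ball w r)) := ((hu r).sub (integrableOn_const hBtop.ne)).abs.aestronglyMeasurable
  rw [integral_eq_lintegral_of_nonneg_ae (ae_of_all _ fun _ => abs_nonneg _) hm]
  calc _ ≤ (ENNReal.ofReal (C * r) * μ (ball w r)).toReal :=
        ENNReal.toReal_mono (by finiteness) H
    _ = C * r * μ.real (ball w r) := by
        rw [ENNReal.toReal_mul, ENNReal.toReal_ofReal (by positivity), measureReal_def]

theorem PoincareBall.abs_setAverage_sub_le (h : PoincareBall μ 1 p w r C lam)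
    (hμ : BallsPosFinite μ) (hr : 0 < r) (hC : 0 ≤ C) (hlam : 0 < lam)
    (hu : ∀ r, IntegrableOn u (ball w r) μ)
    (hg : IsUpperGradient (fun _ => 1) fun y => (u y : EReal))
    {s : Set X} (hs : s ⊆ ball w r) (hs0 : μ s ≠ 0) {K : ℝ≥0} (hK : μ (ball w r) ≤ K * μ s) :
    |⨍ y in s, u y ∂μ - ⨍ y in ball w r, u y ∂μ| ≤ C * r * K := by
  have hBtop := (hμ w r hr).2.ne
  have hstop : μ s ≠ ∞ := ne_top_of_le_ne_top hBtop (measure_mono hs)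
  have hK' : μ.real (ball w r) ≤ K * μ.real s := by
    simpa [measureReal_def, ENNReal.toReal_mul] using ENNReal.toReal_mono (by finiteness) hK
  refine (abs_setAverage_sub_setAverage_le hs hs0 hBtop (hu r)).trans ?_
  have hpos : 0 < μ.real s := ENNReal.toReal_pos hs0 hstop
  rw [div_le_iff₀ hpos]
  calc _ ≤ C * r * μ.real (ball w r) := h.integral_abs_sub_setAverage_le hμ hr hC hlam hu hg
    _ ≤ C * r * (K * μ.real s) := by gcongr
    _ = C * r * K * μ.real s := by ring

theorem abs_sub_setAverage_ball_le (hμ : BallsPosFinite μ) (hD : DoublingWithin μ x0 R D)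
    (hPI : PoincareWithin μ 1 p x0 R C lam) (hC : 0 ≤ C) (hlam : 0 < lam)
    (hu : ∀ r, IntegrableOn u (ball w r) μ) (hcont : ContinuousAt u w)
    (hg : IsUpperGradient (fun _ => 1) fun y => (u y : EReal))
    (hr : 0 < r) (hwr : ball w r ⊆ ball x0 R) :
    |u w - ⨍ y in ball w r, u y ∂μ| ≤ 2 * C * D * r := by
  set a : ℕ → ℝ := fun n => ⨍ y in ball w (r * 2⁻¹ ^ n), u y ∂μ
  have hpos n : 0 < r * 2⁻¹ ^ n := by positivity
  have hsub n : ball w (r * 2⁻¹ ^ n) ⊆ ball x0 R :=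
    (ball_subset_ball (mul_le_of_le_one_right hr.le (pow_le_one₀ (by norm_num) (by norm_num)))).trans
      hwr
  have hstep n : dist (a n) (a (n + 1)) ≤ C * D * r * 2⁻¹ ^ n := by
    have htwice : r * 2⁻¹ ^ n = 2 * (r * 2⁻¹ ^ (n + 1)) := by ring
    rw [dist_comm, Real.dist_eq]
    calc _ ≤ C * (r * 2⁻¹ ^ n) * D :=
          (hPI w _ (hpos n) (hsub n)).abs_setAverage_sub_le hμ (hpos n) hC hlam hu hg
            (ball_subset_ball (by rw [htwice]; linarith [hpos (n + 1)]))
            (hμ w _ (hpos (n + 1))).1.ne'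
            (by rw [htwice]; exact hD w _ (hpos (n + 1)) (hsub (n + 1)))
      _ = C * D * r * 2⁻¹ ^ n := by ring
  have hrad : Tendsto (fun n : ℕ => r * 2⁻¹ ^ n) atTop (𝓝[>] 0) := by
    refine tendsto_nhdsWithin_iff.2 ⟨?_, Eventually.of_forall hpos⟩
    simpa using (tendsto_pow_atTop_nhds_zero_of_lt_one (r := (2⁻¹ : ℝ)) (by norm_num)
      (by norm_num)).const_mul r
  calc |u w - ⨍ y in ball w r, u y ∂μ| = dist (a 0) (u w) := by
        simp [a, Real.dist_eq, abs_sub_comm]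
    _ ≤ C * D * r / (1 - 2⁻¹) := dist_le_of_le_geometric_of_tendsto₀ _ _ (by norm_num) hstep
        ((tendsto_setAverage_ball hμ hu hcont).comp hrad)
    _ = 2 * C * D * r := by ring

theorem abs_sub_le_mul_dist_of_poincare (hμ : BallsPosFinite μ) (hD : DoublingWithin μ x0 R D)
    (hPI : PoincareWithin μ 1 p x0 R C lam) (hC : 0 ≤ C) (hlam : 0 < lam)
    (hu : ∀ w r, IntegrableOn u (ball w r) μ) (hcont : Continuous u)
    (hg : IsUpperGradient (fun _ => 1) fun y => (u y : EReal)) {x y : X}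
    (hx : ball x (2 * dist x y) ⊆ ball x0 R) (hy : ball y (2 * dist x y) ⊆ ball x0 R) :
    |u x - u y| ≤ (6 * C * D + 2 * C * D ^ 2) * dist x y := by
  rcases eq_or_ne x y with rfl | hxy
  · simp
  set δ := dist x y
  have hδ : 0 < δ := dist_pos.2 hxy
  have hyx : ball y δ ⊆ ball x (2 * δ) := ball_subset_ball' (by rw [dist_comm]; linarith)
  have hxy4 : ball x (2 * δ) ⊆ ball y (2 * (2 * δ)) := ball_subset_ball' (by linarith)
  have hμxy : μ (ball x (2 * δ)) ≤ ↑(D ^ 2) * μ (ball y δ) := calc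
    μ (ball x (2 * δ)) ≤ μ (ball y (2 * (2 * δ))) := measure_mono hxy4
    _ ≤ D * μ (ball y (2 * δ)) := hD y _ (by positivity) hy
    _ ≤ D * (D * μ (ball y δ)) := by
        gcongr; exact hD y δ hδ ((ball_subset_ball (by linarith)).trans hy)
    _ = ↑(D ^ 2) * μ (ball y δ) := by push_cast; ring
  have hxB := abs_sub_setAverage_ball_le hμ hD hPI hC hlam (hu x) hcont.continuousAt hg
    (by positivity) hx
  have hyB := abs_sub_setAverage_ball_le hμ hD hPI hC hlam (hu y) hcont.continuousAt hg hδ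
    ((ball_subset_ball (by linarith)).trans hy)
  have hmid := (hPI x _ (by positivity) hx).abs_setAverage_sub_le hμ (by positivity) hC hlam
    (hu x) hg hyx (hμ y δ hδ).1.ne' hμxy
  push_cast at hmid
  rw [abs_le] at hxB hyB hmid ⊢
  constructor <;> linarith [hxB.1, hxB.2, hyB.1, hyB.2, hmid.1, hmid.2]

end Poincare

section Chain

variable {X : Type*} [PseudoMetricSpace X] {ε : ℝ} {x y : X}

def chainLength (z : ℕ → X) (k : ℕ) : ℝ := ∑ i ∈ Finset.range k, dist (z i) (z (i + 1))

theorem chainLength_nonneg (z : ℕ → X) (k : ℕ) : 0 ≤ chainLength z k :=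
  Finset.sum_nonneg fun _ _ => dist_nonneg

theorem chainLength_mono (z : ℕ → X) : Monotone (chainLength z) := fun _ _ h =>
  Finset.sum_le_sum_of_subset_of_nonneg (Finset.range_subset_range.2 h) fun _ _ _ => dist_nonneg

theorem dist_le_chainLength_sub (z : ℕ → X) {i j : ℕ} (h : i ≤ j) :
    dist (z i) (z j) ≤ chainLength z j - chainLength z i := by
  rw [chainLength, chainLength, ← Finset.sum_Ico_eq_sub _ h]
  exact dist_le_Ico_sum_dist z h

noncomputable def chainDist (ε : ℝ) (x y : X) : ℝ≥0∞ :=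
  ⨅ (k : ℕ) (z : ℕ → X) (_ : z 0 = x) (_ : z k = y) (_ : ∀ i < k, dist (z i) (z (i + 1)) ≤ ε),
    ENNReal.ofReal (chainLength z k)

theorem chainDist_le_chainLength {k : ℕ} {z : ℕ → X} (hz : ∀ i < k, dist (z i) (z (i + 1)) ≤ ε) :
    chainDist ε (z 0) (z k) ≤ ENNReal.ofReal (chainLength z k) :=
  iInf_le_of_le k <| iInf_le_of_le z <| iInf_le_of_le rfl <| iInf_le_of_le rfl <|
    iInf_le_of_le hz le_rfl

theorem exists_chain_of_chainDist_lt {t : ℝ≥0∞} (h : chainDist ε x y < t) :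
    ∃ (k : ℕ) (z : ℕ → X), z 0 = x ∧ z k = y ∧ (∀ i < k, dist (z i) (z (i + 1)) ≤ ε) ∧
      ENNReal.ofReal (chainLength z k) < t := by
  simpa only [chainDist, iInf_lt_iff, exists_prop] using h

theorem chainDist_self (ε : ℝ) (x : X) : chainDist ε x x = 0 := by
  simpa [chainLength] using chainDist_le_chainLength (ε := ε) (k := 0) (z := fun _ => x) (by simp)

theorem chainDist_le_dist (h : dist x y ≤ ε) : chainDist ε x y ≤ ENNReal.ofReal (dist x y) := by
  simpa [chainLength] using
    chainDist_le_chainLength (k := 1) (z := fun i => if i = 0 then x else y) (by simpa using h)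

theorem chainDist_triangle (ε : ℝ) (x y w : X) :
    chainDist ε x w ≤ chainDist ε x y + chainDist ε y w := by
  conv_rhs => simp only [chainDist, ENNReal.iInf_add, ENNReal.add_iInf]
  simp only [le_iInf_iff]
  -- the binders of the chain from `y` to `w` come first
  rintro k' b rfl rfl hb' k a rfl hab ha
  let c : ℕ → X := fun i => if i < k then a i else b (i - k)
  have hca : ∀ i ≤ k, c i = a i := fun i hi => by
    rcases hi.lt_or_eq with hi | rfl
    · simp [c, hi]
    · simp [c, hab]
  have hcb : ∀ j, c (k + j) = b j := fun j => by simp [c]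
  have hc : ∀ i < k + k', dist (c i) (c (i + 1)) ≤ ε := by
    intro i hi
    rcases lt_or_ge i k with hik | hik
    · rw [hca i hik.le, hca (i + 1) hik]; exact ha i hik
    · obtain ⟨j, rfl⟩ := Nat.exists_eq_add_of_le hik
      rw [hcb, add_assoc, hcb]; exact hb' j (by omega)
  have hlen : chainLength c (k + k') = chainLength a k + chainLength b k' := by
    rw [chainLength, Finset.sum_range_add]
    congr 1
    · exact Finset.sum_congr rfl fun i hi => by
        rw [hca i (Finset.mem_range.1 hi).le, hca (i + 1) (Finset.mem_range.1 hi)]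
    · exact Finset.sum_congr rfl fun j _ => by rw [hcb, add_assoc, hcb]
  calc chainDist ε (a 0) (b k') = chainDist ε (c 0) (c (k + k')) := by
        rw [hca 0 (Nat.zero_le _), hcb]
    _ ≤ ENNReal.ofReal (chainLength c (k + k')) := chainDist_le_chainLength hc
    _ = _ := by
        rw [hlen, ENNReal.ofReal_add (chainLength_nonneg a k) (chainLength_nonneg b k')]

theorem chainDist_comm (ε : ℝ) (x y : X) : chainDist ε x y = chainDist ε y x := by
  suffices h : ∀ x y : X, chainDist ε y x ≤ chainDist ε x y from le_antisymm (h y x) (h x y)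
  intro x y
  conv_rhs => rw [chainDist]
  simp only [le_iInf_iff]
  rintro k a rfl rfl ha
  have hrev : ∀ i < k, dist (a (k - i)) (a (k - (i + 1))) ≤ ε := fun i hi => by
    rw [dist_comm, show k - i = k - (i + 1) + 1 by omega]; exact ha _ (by omega)
  have hlen : chainLength (fun i => a (k - i)) k = chainLength a k := by
    rw [chainLength, chainLength, ← Finset.sum_range_reflect]
    refine Finset.sum_congr rfl fun i hi => ?_
    have hi := Finset.mem_range.1 hi
    rw [show k - (k - 1 - i) = i + 1 by omega, show k - (k - 1 - i + 1) = i by omega, dist_comm]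
  simpa [hlen] using chainDist_le_chainLength (z := fun i => a (k - i)) hrev

end Chain

section UpperGradient

variable {X : Type*} [PseudoMetricSpace X] {ε : ℝ} {x y : X}

theorem IsUnitSpeedCurve.dist_le {γ : ℝ → X} {l : ℝ} (hγ : IsUnitSpeedCurve γ l) {a b : ℝ}
    (ha : 0 ≤ a) (hab : a ≤ b) (hb : b ≤ l) : dist (γ a) (γ b) ≤ b - a := by
  have := eVariationOn.edist_le γ (left_mem_Icc.2 hab) (right_mem_Icc.2 hab)
  rw [hγ.2.2 a b ha hab hb, edist_dist] at this
  exact (ENNReal.ofReal_le_ofReal_iff (by linarith)).1 this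

theorem chainDist_le_of_isUnitSpeedCurve (hε : 0 < ε) {γ : ℝ → X} {l : ℝ}
    (hγ : IsUnitSpeedCurve γ l) : chainDist ε (γ 0) (γ l) ≤ ENNReal.ofReal l := by
  obtain ⟨n, hn⟩ := exists_nat_gt (l / ε)
  have hn0 : (0 : ℝ) < n := (div_pos hγ.1 hε).trans hn
  have hstep : ∀ i < n, dist (γ (i * (l / n))) (γ ((i + 1 : ℕ) * (l / n))) ≤ l / n := by
    intro i hi
    have hi' : (i : ℝ) + 1 ≤ n := by exact_mod_cast hi
    have hln : 0 ≤ l / n := div_nonneg hγ.1.le hn0.le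
    have := hγ.dist_le (a := i * (l / n)) (b := (i + 1) * (l / n)) (by positivity) (by nlinarith)
      (calc ((i : ℝ) + 1) * (l / n) ≤ n * (l / n) := by nlinarith
        _ = l := by field_simp)
    push_cast
    exact this.trans_eq (by ring)
  have hmesh : l / n ≤ ε := by
    rw [div_le_iff₀ hn0]; rw [div_lt_iff₀ hε] at hn; linarith
  have hlen : chainLength (fun i : ℕ => γ (i * (l / n))) n ≤ l := by
    calc _ ≤ ∑ _i ∈ Finset.range n, l / n := Finset.sum_le_sum fun i hi =>
          hstep i (Finset.mem_range.1 hi)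
      _ = l := by rw [Finset.sum_const, Finset.card_range, nsmul_eq_mul]; field_simp
  have := chainDist_le_chainLength (z := fun i : ℕ => γ (i * (l / n))) fun i hi =>
    (hstep i hi).trans hmesh
  simp only [CharP.cast_eq_zero, zero_mul] at this
  rw [show (n : ℝ) * (l / n) = l by field_simp] at this
  exact this.trans (ENNReal.ofReal_le_ofReal hlen)

theorem erealAbsE_coe_sub (a b : ℝ) :
    erealAbsE ((a : EReal) - b) = ENNReal.ofReal |a - b| := by
  rw [← EReal.coe_sub, erealAbsE, if_neg (not_or.2 ⟨EReal.coe_ne_top _, EReal.coe_ne_bot _⟩),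
    EReal.toReal_coe]

theorem isUpperGradient_one_of_abs_sub_le [MeasurableSpace X] {u : X → ℝ}
    (h : ∀ γ l, IsUnitSpeedCurve γ l → |u (γ 0) - u (γ l)| ≤ l) :
    IsUpperGradient (fun _ => 1) fun y => (u y : EReal) := by
  refine ⟨measurable_const, fun γ l hγ => ?_⟩
  rw [erealAbsE_coe_sub, setLIntegral_one, Real.volume_Icc, sub_zero]
  exact ENNReal.ofReal_le_ofReal (h γ l hγ)

-- The cap `M` makes the function bounded, hence integrable on balls.
noncomputable def truncChainDist (ε M : ℝ) (x y : X) : ℝ :=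
  (min (chainDist ε x y) (ENNReal.ofReal M)).toReal

theorem truncChainDist_self (ε M : ℝ) (x : X) : truncChainDist ε M x x = 0 := by
  simp [truncChainDist, chainDist_self]

theorem abs_truncChainDist_le {M : ℝ} (hM : 0 ≤ M) (y : X) : |truncChainDist ε M x y| ≤ M := by
  rw [truncChainDist, abs_of_nonneg ENNReal.toReal_nonneg]
  exact ENNReal.toReal_le_of_le_ofReal hM (min_le_right _ _)

theorem truncChainDist_le_add (M : ℝ) (x : X) {a b : X} {c : ℝ} (hc : 0 ≤ c)
    (h : chainDist ε a b ≤ ENNReal.ofReal c) :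
    truncChainDist ε M x b ≤ truncChainDist ε M x a + c := by
  have key : min (chainDist ε x b) (ENNReal.ofReal M) ≤
      min (chainDist ε x a) (ENNReal.ofReal M) + ENNReal.ofReal c := calc
    _ ≤ min (chainDist ε x a + ENNReal.ofReal c) (ENNReal.ofReal M + ENNReal.ofReal c) :=
        min_le_min ((chainDist_triangle ε x a b).trans (by gcongr)) le_self_add
    _ = _ := min_add_add_right _ _ _
  have hfin : min (chainDist ε x a) (ENNReal.ofReal M) ≠ ⊤ :=
    ne_top_of_le_ne_top ENNReal.ofReal_ne_top (min_le_right _ _)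
  have := ENNReal.toReal_mono (by finiteness) key
  rwa [ENNReal.toReal_add hfin ENNReal.ofReal_ne_top, ENNReal.toReal_ofReal hc] at this

theorem abs_truncChainDist_sub_le (M : ℝ) (x : X) {a b : X} {c : ℝ} (hc : 0 ≤ c)
    (h : chainDist ε a b ≤ ENNReal.ofReal c) :
    |truncChainDist ε M x a - truncChainDist ε M x b| ≤ c := by
  have h₁ := truncChainDist_le_add M x hc h
  have h₂ := truncChainDist_le_add M x hc (chainDist_comm ε a b ▸ h)
  exact abs_sub_le_iff.2 ⟨by linarith, by linarith⟩

theorem continuous_truncChainDist (hε : 0 < ε) (M : ℝ) (x : X) :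
    Continuous (truncChainDist ε M x) := by
  refine Metric.continuous_iff.2 fun b η hη => ⟨min ε η, lt_min hε hη, fun a ha => ?_⟩
  have ha' := lt_min_iff.1 ha
  rw [Real.dist_eq]
  exact (abs_truncChainDist_sub_le M x dist_nonneg (chainDist_le_dist ha'.1.le)).trans_lt ha'.2

theorem isUpperGradient_one_truncChainDist [MeasurableSpace X] (hε : 0 < ε) (M : ℝ) (x : X) :
    IsUpperGradient (fun _ => 1) fun y => (truncChainDist ε M x y : EReal) :=
  isUpperGradient_one_of_abs_sub_le fun _ _ hγ =>
    abs_truncChainDist_sub_le M x hγ.1.le (chainDist_le_of_isUnitSpeedCurve hε hγ)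

theorem chainDist_le_of_truncChainDist_le {M c : ℝ} (hc : 0 ≤ c) (hcM : c < M)
    (h : truncChainDist ε M x y ≤ c) : chainDist ε x y ≤ ENNReal.ofReal c := by
  rw [truncChainDist, ← ENNReal.le_ofReal_iff_toReal_le
    (ne_top_of_le_ne_top ENNReal.ofReal_ne_top (min_le_right _ _)) hc, min_le_iff] at h
  exact h.resolve_right fun h' => hcM.not_ge ((ENNReal.ofReal_le_ofReal_iff hc).1 h')

end UpperGradient

section ChainDistSup

variable {X : Type*} [PseudoMetricSpace X]

noncomputable def chainDistSup (x y : X) : ℝ≥0∞ := ⨆ (ε : ℝ) (_ : 0 < ε), chainDist ε x y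

theorem chainDist_le_chainDistSup {ε : ℝ} (hε : 0 < ε) (x y : X) :
    chainDist ε x y ≤ chainDistSup x y :=
  le_iSup₂ (f := fun ε (_ : 0 < ε) => chainDist ε x y) ε hε

theorem chainDistSup_le {x y : X} {c : ℝ≥0∞} (h : ∀ ε > 0, chainDist ε x y ≤ c) :
    chainDistSup x y ≤ c :=
  iSup₂_le h

theorem chainDistSup_triangle (x y z : X) :
    chainDistSup x z ≤ chainDistSup x y + chainDistSup y z :=
  chainDistSup_le fun ε hε => (chainDist_triangle ε x y z).trans
    (add_le_add (chainDist_le_chainDistSup hε x y) (chainDist_le_chainDistSup hε y z))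

theorem chainDistSup_comm (x y : X) : chainDistSup x y = chainDistSup y x := by
  simp only [chainDistSup, chainDist_comm _ x y]

end ChainDistSup

section ChainDistBound

variable {X : Type*} [MetricSpace X] [MeasurableSpace X] [OpensMeasurableSpace X] {μ : Measure X}
  {p C lam R : ℝ} {x0 : X} {D : ℝ≥0}

theorem BallsPosFinite.integrableOn_ball (hμ : BallsPosFinite μ) {u : X → ℝ} (hu : Continuous u)
    {M : ℝ} (hM : ∀ y, |u y| ≤ M) (w : X) (r : ℝ) : IntegrableOn u (ball w r) μ := by
  rcases le_or_gt r 0 with hr | hr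
  · simp [ball_eq_empty.2 hr]
  · exact Measure.integrableOn_of_bounded (hμ w r hr).2.ne hu.aestronglyMeasurable
      (ae_of_all _ hM)

theorem chainDist_le_of_poincare (hμ : BallsPosFinite μ) (hD : DoublingWithin μ x0 R D)
    (hPI : PoincareWithin μ 1 p x0 R C lam) (hC : 0 ≤ C) (hlam : 0 < lam) {ε : ℝ} (hε : 0 < ε)
    {x y : X} (hx : ball x (2 * dist x y) ⊆ ball x0 R) (hy : ball y (2 * dist x y) ⊆ ball x0 R) :
    chainDist ε x y ≤ ENNReal.ofReal ((6 * C * D + 2 * C * D ^ 2) * dist x y) := by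
  set c := (6 * C * D + 2 * C * D ^ 2) * dist x y
  have hc : 0 ≤ c := by positivity
  have hcont := continuous_truncChainDist hε (c + 1) x
  have hxy := abs_sub_le_mul_dist_of_poincare hμ hD hPI hC hlam
    (hμ.integrableOn_ball hcont (abs_truncChainDist_le (by linarith))) hcont
    (isUpperGradient_one_truncChainDist hε (c + 1) x) hx hy
  rw [truncChainDist_self, zero_sub, abs_neg] at hxy
  exact chainDist_le_of_truncChainDist_le hc (lt_add_one c) ((le_abs_self _).trans hxy)

theorem exists_ball_chainDistSup_le_mul_dist (hμ : BallsPosFinite μ) (x0 : X)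
    (hdbl : ∃ r0 : ℝ, 0 < r0 ∧ ∃ C : ℝ≥0, DoublingWithin μ x0 r0 C)
    (hPI : ∃ r0 : ℝ, 0 < r0 ∧ ∃ C : ℝ, 0 < C ∧ ∃ lam : ℝ, 1 ≤ lam ∧
      PoincareWithin μ 1 p x0 r0 C lam) :
    ∃ s > 0, ∃ L > 0, ∀ x ∈ ball x0 s, ∀ y ∈ ball x0 s,
      chainDistSup x y ≤ ENNReal.ofReal (L * dist x y) := by
  obtain ⟨r1, hr1, D, hD⟩ := hdbl
  obtain ⟨r2, hr2, C, hC, lam, hlam, hP⟩ := hPI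
  set R := min r1 r2
  have hR : 0 < R := lt_min hr1 hr2
  refine ⟨R / 5, by positivity, 6 * C * D + 2 * C * D ^ 2 + 1, by positivity,
    fun x hx y hy => chainDistSup_le fun ε hε => ?_⟩
  have hxy : dist x y < 2 * (R / 5) := by
    linarith [dist_triangle_right x y x0, mem_ball.1 hx, mem_ball.1 hy]
  have hsub : ∀ w ∈ ball x0 (R / 5), ball w (2 * dist x y) ⊆ ball x0 R := fun w hw =>
    ball_subset_ball' (by linarith [mem_ball.1 hw])
  refine (chainDist_le_of_poincare hμ (hD.mono (min_le_left _ _)) (hP.mono (min_le_right _ _))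
    hC.le (by linarith) hε (hsub x hx) (hsub y hy)).trans
    (ENNReal.ofReal_le_ofReal (mul_le_mul_of_nonneg_right (by linarith) dist_nonneg))

end ChainDistBound

section Curve

variable {X : Type*} [MetricSpace X]

theorem LipschitzOnWith.connectsInWithLength {γ : ℝ → X} {K : ℝ≥0}
    (h : LipschitzOnWith K γ (Icc 0 1)) : ConnectsInWithLength γ (γ 0) (γ 1) univ K := by
  refine ⟨h.continuousOn, rfl, rfl, fun _ _ => mem_univ _, ?_⟩
  calc eVariationOn γ (Icc 0 1) = eVariationOn (γ ∘ id) (Icc 0 1) := rfl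
    _ ≤ K * eVariationOn id (Icc (0 : ℝ) 1) := h.comp_eVariationOn_le (mapsTo_id _)
    _ = K := by simp [eVariationOn_id_Icc]

theorem exists_approxLipschitz_path_of_chain (z : ℕ → X) (k : ℕ) {m : ℝ} (hm0 : 0 ≤ m)
    (hm : ∀ i < k, dist (z i) (z (i + 1)) ≤ m) :
    ∃ f : ℝ → X, f 0 = z 0 ∧ f 1 = z k ∧ (∀ t, ∃ i ≤ k, f t = z i) ∧
      ∀ s ∈ Icc (0 : ℝ) 1, ∀ t ∈ Icc (0 : ℝ) 1,
        dist (f s) (f t) ≤ chainLength z k * dist s t + m := by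
  classical
  set σ := chainLength z
  set S := σ k
  have hS : 0 ≤ S := chainLength_nonneg z k
  -- `j t` is the last vertex reached after travelling the fraction `t` of the total length
  let j : ℝ → ℕ := fun t => Nat.findGreatest (fun i => σ i ≤ S * t) k
  have hj_le : ∀ {t}, 0 ≤ t → σ (j t) ≤ S * t := fun ht =>
    Nat.findGreatest_spec (P := fun i => σ i ≤ S * _) (Nat.zero_le k)
      (by simp only [σ, chainLength, Finset.range_zero, Finset.sum_empty]; positivity)
  have hj_ge : ∀ {t}, t ≤ 1 → S * t - m ≤ σ (j t) := by
    intro t ht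
    rcases (Nat.findGreatest_le (P := fun i => σ i ≤ S * t) k).lt_or_eq with hjk | hjk
    · have hnext := Nat.findGreatest_is_greatest (lt_add_one (j t)) hjk
      have hσ : σ (j t + 1) = σ (j t) + dist (z (j t)) (z (j t + 1)) :=
        Finset.sum_range_succ _ _
      linarith [hm (j t) hjk, not_le.1 hnext]
    · have hjt : j t = k := hjk
      rw [hjt]; nlinarith
  have hmono : ∀ {s t}, s ≤ t → j s ≤ j t := fun hst =>
    Nat.findGreatest_mono_left (fun i hi => hi.trans (mul_le_mul_of_nonneg_left hst hS)) k
  have hclose : ∀ s ∈ Icc (0 : ℝ) 1, ∀ t ∈ Icc (0 : ℝ) 1, s ≤ t →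
      dist (z (j s)) (z (j t)) ≤ S * (t - s) + m := fun s hs t ht hst => by
    linarith [dist_le_chainLength_sub z (hmono hst), hj_le ht.1, hj_ge hs.2]
  refine ⟨fun t => z (j t), ?_, ?_, fun t => ⟨j t, Nat.findGreatest_le k, rfl⟩,
    fun s hs t ht => ?_⟩
  · have h0 := dist_le_chainLength_sub z (Nat.zero_le (j 0))
    have : σ (j 0) ≤ 0 := by simpa using hj_le le_rfl
    have : σ 0 = 0 := by simp [σ, chainLength]
    exact (dist_le_zero.1 (by linarith)).symm
  · exact congrArg z (Nat.findGreatest_eq (by simp [S]))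
  · rcases le_total s t with hst | hst
    · rw [Real.dist_eq, abs_of_nonpos (by linarith), neg_sub]
      exact hclose s hs t ht hst
    · rw [dist_comm, Real.dist_eq, abs_of_nonneg (by linarith)]
      exact hclose t ht s hs hst

theorem exists_lipschitzOnWith_of_approxLipschitz {K : Set X} (hK : IsCompact K) {c : ℝ≥0}
    {η : ℕ → ℝ} (hη : Tendsto η atTop (𝓝 0)) {f : ℕ → ℝ → X} (hfK : ∀ n t, f n t ∈ K)
    (hf : ∀ n, ∀ s ∈ Icc (0 : ℝ) 1, ∀ t ∈ Icc (0 : ℝ) 1, dist (f n s) (f n t) ≤ c * dist s t + η n)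
    {x y : X} (h0 : ∀ n, f n 0 = x) (h1 : ∀ n, f n 1 = y) :
    ∃ γ : ℝ → X, LipschitzOnWith c γ (Icc 0 1) ∧ γ 0 = x ∧ γ 1 = y := by
  set 𝒰 : Ultrafilter ℕ := Ultrafilter.of atTop
  obtain ⟨γ, -, hγ⟩ := (isCompact_univ_pi fun _ : ℝ => hK).ultrafilter_le_nhds (𝒰.map f)
    (by simp [Set.preimage, hfK])
  have hγt : ∀ t, Tendsto (fun n => f n t) 𝒰 (𝓝 (γ t)) := tendsto_pi_nhds.1 hγ
  refine ⟨γ, LipschitzOnWith.of_dist_le_mul fun s hs t ht => ?_, ?_, ?_⟩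
  · have hlim : Tendsto (fun n => c * dist s t + η n) 𝒰 (𝓝 (c * dist s t)) := by
      simpa using (hη.const_add (c * dist s t)).mono_left (Ultrafilter.of_le _)
    exact le_of_tendsto_of_tendsto ((hγt s).dist (hγt t)) hlim
      (Eventually.of_forall fun n => hf n s hs t ht)
  · exact tendsto_nhds_unique (hγt 0) (by simp [h0])
  · exact tendsto_nhds_unique (hγt 1) (by simp [h1])

theorem exists_connectsInWithLength_of_chainDistSup_le {x y : X} {c r : ℝ} (hc : 0 ≤ c)
    (hcr : c < r) (hK : IsCompact (closedBall x r)) (h : chainDistSup x y ≤ ENNReal.ofReal c) :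
    ∃ γ : ℝ → X, ConnectsInWithLength γ x y univ (ENNReal.ofReal c) := by
  have happrox : ∀ n : ℕ, ∃ f : ℝ → X, f 0 = x ∧ f 1 = y ∧ (∀ t, f t ∈ closedBall x r) ∧
      ∀ s ∈ Icc (0 : ℝ) 1, ∀ t ∈ Icc (0 : ℝ) 1,
        dist (f s) (f t) ≤ c * dist s t + 2 * ((r - c) / (n + 1)) := by
    intro n
    set ε := (r - c) / (n + 1)
    have hε : 0 < ε := div_pos (by linarith) (by positivity)
    have hεr : ε ≤ r - c := div_le_self (by linarith) (by simp)
    have hlt : chainDist ε x y < ENNReal.ofReal (c + ε) :=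
      ((chainDist_le_chainDistSup hε x y).trans h).trans_lt
        ((ENNReal.ofReal_lt_ofReal_iff (by linarith)).2 (by linarith))
    obtain ⟨k, z, rfl, rfl, hz, hlen⟩ := exists_chain_of_chainDist_lt hlt
    rw [ENNReal.ofReal_lt_ofReal_iff (by linarith)] at hlen
    obtain ⟨f, hf0, hf1, hfz, hf⟩ := exists_approxLipschitz_path_of_chain z k hε.le hz
    refine ⟨f, hf0, hf1, fun t => ?_, fun s hs t ht => (hf s hs t ht).trans ?_⟩
    · obtain ⟨i, hik, hfi⟩ := hfz t
      have := dist_le_chainLength_sub z (Nat.zero_le i)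
      have := chainLength_mono z hik
      rw [mem_closedBall, hfi, dist_comm]
      simp only [chainLength, Finset.range_zero, Finset.sum_empty, sub_zero] at *
      linarith
    · have hst : dist s t ≤ 1 := by
        rw [Real.dist_eq, abs_le]; constructor <;> linarith [hs.1, hs.2, ht.1, ht.2]
      nlinarith [dist_nonneg (x := s) (y := t)]
  choose f hf0 hf1 hfK hf using happrox
  have hη : Tendsto (fun n : ℕ => 2 * ((r - c) / (n + 1))) atTop (𝓝 0) := by
    simpa [div_eq_mul_inv] using
      (tendsto_one_div_add_atTop_nhds_zero_nat.const_mul (r - c)).const_mul 2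
  obtain ⟨γ, hγ, rfl, rfl⟩ := exists_lipschitzOnWith_of_approxLipschitz hK (c := c.toNNReal) hη hfK
    (by simpa [Real.coe_toNNReal _ hc] using hf) hf0 hf1
  exact ⟨γ, hγ.connectsInWithLength⟩

end Curve

section LocalToGlobal

variable {X : Type*} [PseudoMetricSpace X] {D : X → X → ℝ≥0∞}

theorem ne_top_of_locally_le_mul_dist [PreconnectedSpace X] (hcomm : ∀ x y, D x y = D y x)
    (htri : ∀ x y z, D x z ≤ D x y + D y z)
    (hloc : ∀ z, ∃ s > 0, ∃ L : ℝ, ∀ x ∈ ball z s, ∀ y ∈ ball z s,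
      D x y ≤ ENNReal.ofReal (L * dist x y))
    (x y : X) : D x y ≠ ⊤ := by
  have : Std.Symm fun x y => D x y ≠ ⊤ := ⟨fun x y h => by rwa [hcomm]⟩
  refine PreconnectedSpace.induction₂ _ (fun z => ?_)
    ⟨fun a b c hab hbc => ne_top_of_le_ne_top (add_ne_top.2 ⟨hab, hbc⟩) (htri a b c)⟩ x y
  obtain ⟨s, hs, L, h⟩ := hloc z
  filter_upwards [ball_mem_nhds z hs] with y hy
  exact ne_top_of_le_ne_top ofReal_ne_top (h z (mem_ball_self hs) y hy)

theorem IsCompact.exists_forall_dist_lt_le_mul_dist {K : Set X} (hK : IsCompact K)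
    (hloc : ∀ z, ∃ s > 0, ∃ L : ℝ, ∀ x ∈ ball z s, ∀ y ∈ ball z s,
      D x y ≤ ENNReal.ofReal (L * dist x y)) :
    ∃ δ > 0, ∃ L : ℝ, ∀ x ∈ K, ∀ y, dist x y < δ → D x y ≤ ENNReal.ofReal (L * dist x y) := by
  refine hK.induction_on (p := fun S => ∃ δ > 0, ∃ L : ℝ, ∀ x ∈ S, ∀ y, dist x y < δ →
    D x y ≤ ENNReal.ofReal (L * dist x y)) ⟨1, one_pos, 0, by simp⟩ ?_ ?_ ?_
  · rintro S T hST ⟨δ, hδ, L, h⟩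
    exact ⟨δ, hδ, L, fun x hx => h x (hST hx)⟩
  · rintro S T ⟨δ, hδ, L, h⟩ ⟨δ', hδ', L', h'⟩
    refine ⟨min δ δ', lt_min hδ hδ', max L L', ?_⟩
    rintro x (hx | hx) y hxy
    · exact (h x hx y (hxy.trans_le (min_le_left _ _))).trans <| ofReal_le_ofReal <|
        mul_le_mul_of_nonneg_right (le_max_left _ _) dist_nonneg
    · exact (h' x hx y (hxy.trans_le (min_le_right _ _))).trans <| ofReal_le_ofReal <|
        mul_le_mul_of_nonneg_right (le_max_right _ _) dist_nonneg
  · intro z _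
    obtain ⟨s, hs, L, h⟩ := hloc z
    refine ⟨ball z (s / 2), mem_nhdsWithin_of_mem_nhds (ball_mem_nhds z (half_pos hs)),
      s / 2, half_pos hs, L, fun x hx y hxy => h x (ball_subset_ball (by linarith) hx) y ?_⟩
    rw [mem_ball] at hx ⊢
    linarith [dist_triangle y x z, dist_comm x y]

theorem IsCompact.exists_forall_le_of_locally_le {K : Set X} (hK : IsCompact K)
    (htri : ∀ x y z, D x z ≤ D x y + D y z) (hfin : ∀ x y, D x y ≠ ⊤)
    (hloc : ∀ z, ∃ s > 0, ∃ L : ℝ, ∀ x ∈ ball z s, ∀ y ∈ ball z s,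
      D x y ≤ ENNReal.ofReal (L * dist x y)) (o : X) :
    ∃ T ≥ 0, ∀ x ∈ K, D o x ≤ ENNReal.ofReal T := by
  refine hK.induction_on (p := fun S => ∃ T ≥ 0, ∀ x ∈ S, D o x ≤ ENNReal.ofReal T)
    ⟨0, le_rfl, by simp⟩ ?_ ?_ ?_
  · rintro S T hST ⟨M, hM, h⟩
    exact ⟨M, hM, fun x hx => h x (hST hx)⟩
  · rintro S T ⟨M, hM, h⟩ ⟨M', hM', h'⟩
    refine ⟨max M M', le_max_of_le_left hM, ?_⟩
    rintro x (hx | hx)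
    · exact (h x hx).trans (ofReal_le_ofReal (le_max_left _ _))
    · exact (h' x hx).trans (ofReal_le_ofReal (le_max_right _ _))
  · intro z _
    obtain ⟨s, hs, L, h⟩ := hloc z
    refine ⟨ball z s, mem_nhdsWithin_of_mem_nhds (ball_mem_nhds z hs),
      (D o z).toReal + |L| * s, by positivity, fun x hx => ?_⟩
    have hLx : L * dist z x ≤ |L| * s := calc
      L * dist z x ≤ |L| * dist z x := mul_le_mul_of_nonneg_right (le_abs_self L) dist_nonneg
      _ ≤ |L| * s := mul_le_mul_of_nonneg_left (mem_ball'.1 hx).le (abs_nonneg L)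
    calc D o x ≤ D o z + D z x := htri o z x
      _ ≤ ENNReal.ofReal (D o z).toReal + ENNReal.ofReal (|L| * s) := by
          rw [ofReal_toReal (hfin o z)]
          gcongr; exact (h z (mem_ball_self hs) x hx).trans (ofReal_le_ofReal hLx)
      _ = _ := (ofReal_add toReal_nonneg (by positivity)).symm

theorem IsCompact.exists_le_mul_dist_of_locally_le {K : Set X} (hK : IsCompact K)
    (hcomm : ∀ x y, D x y = D y x) (htri : ∀ x y z, D x z ≤ D x y + D y z)
    (hfin : ∀ x y, D x y ≠ ⊤)
    (hloc : ∀ z, ∃ s > 0, ∃ L : ℝ, ∀ x ∈ ball z s, ∀ y ∈ ball z s,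
      D x y ≤ ENNReal.ofReal (L * dist x y)) :
    ∃ L > 0, ∀ x ∈ K, ∀ y ∈ K, D x y ≤ ENNReal.ofReal (L * dist x y) := by
  rcases K.eq_empty_or_nonempty with rfl | ⟨o, -⟩
  · exact ⟨1, one_pos, by simp⟩
  obtain ⟨δ, hδ, Λ, hnear⟩ := hK.exists_forall_dist_lt_le_mul_dist hloc
  obtain ⟨T, hT, hfar⟩ := hK.exists_forall_le_of_locally_le htri hfin hloc o
  refine ⟨max Λ 1 + 2 * T / δ, by positivity, fun x hx y hy => ?_⟩
  rcases lt_or_ge (dist x y) δ with hxy | hxy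
  · refine (hnear x hx y hxy).trans (ofReal_le_ofReal (mul_le_mul_of_nonneg_right ?_ dist_nonneg))
    linarith [le_max_left Λ 1, div_nonneg (mul_nonneg zero_le_two hT) hδ.le]
  · calc D x y ≤ D o x + D o y := hcomm o x ▸ htri x o y
      _ ≤ ENNReal.ofReal T + ENNReal.ofReal T := add_le_add (hfar x hx) (hfar y hy)
      _ = ENNReal.ofReal (2 * T / δ * δ) := by
          rw [← ofReal_add hT hT, div_mul_cancel₀ _ hδ.ne', two_mul]
      _ ≤ ENNReal.ofReal ((max Λ 1 + 2 * T / δ) * dist x y) := ofReal_le_ofReal <|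
          mul_le_mul (by linarith [le_max_right Λ 1]) hxy hδ.le (by positivity)

end LocalToGlobal

theorem exists_ball_forall_connectsInWithLength {X : Type*} [MetricSpace X]
    [LocallyCompactSpace X] {x0 : X} {s L : ℝ} (hs : 0 < s) (hL : 0 < L)
    (h : ∀ x ∈ ball x0 s, ∀ y ∈ ball x0 s, chainDistSup x y ≤ ENNReal.ofReal (L * dist x y)) :
    ∃ r0 > 0, ∀ x ∈ ball x0 r0, ∀ y ∈ ball x0 r0,
      ∃ γ : ℝ → X, ConnectsInWithLength γ x y univ (ENNReal.ofReal (L * dist x y)) := by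
  obtain ⟨t, ht, hKt⟩ := exists_isCompact_closedBall x0
  set r0 := min s (t / (4 * (L + 1)))
  have hr0 : r0 * (4 * (L + 1)) ≤ t := (le_div_iff₀ (by positivity)).1 (min_le_right _ _)
  have hr0pos : 0 < r0 := by positivity
  refine ⟨r0, hr0pos, fun x hx y hy => ?_⟩
  have hxy : dist x y < 2 * r0 := by
    linarith [dist_triangle_right x y x0, mem_ball.1 hx, mem_ball.1 hy]
  have hK : IsCompact (closedBall x (t / 2)) := hKt.of_isClosed_subset isClosed_closedBall
    (closedBall_subset_closedBall' (by nlinarith [mem_ball.1 hx]))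
  exact exists_connectsInWithLength_of_chainDistSup_le (by positivity)
    (by nlinarith [mul_lt_mul_of_pos_left hxy hL]) hK
    (h x (ball_subset_ball (min_le_left _ _) hx) y (ball_subset_ball (min_le_left _ _) hy))

theorem locally_and_semilocally_quasiconvex_general
    {X : Type*} [MetricSpace X] [MeasurableSpace X] [BorelSpace X] [LocallyCompactSpace X]
    (μ : Measure X) (hμ : BallsPosFinite μ) (p : ℝ)
    (hdbl : ∀ x0 : X, ∃ r0 : ℝ, 0 < r0 ∧ ∃ C : ℝ≥0, DoublingWithin μ x0 r0 C)
    (hPI : ∀ x0 : X, ∃ r0 : ℝ, 0 < r0 ∧ ∃ C : ℝ, 0 < C ∧ ∃ lam : ℝ, 1 ≤ lam ∧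
      PoincareWithin μ 1 p x0 r0 C lam) :
    (∀ x0 : X, ∃ r0 : ℝ, 0 < r0 ∧ ∃ L : ℝ, 0 < L ∧
      ∀ x ∈ ball x0 r0, ∀ y ∈ ball x0 r0, ∃ γ : ℝ → X,
        ConnectsInWithLength γ x y Set.univ (ENNReal.ofReal (L * dist x y))) ∧
    (ProperSpace X → ConnectedSpace X →
      ∀ (x0 : X) (r0 : ℝ), 0 < r0 → ∃ L : ℝ, 0 < L ∧
        ∀ x ∈ ball x0 r0, ∀ y ∈ ball x0 r0, ∃ γ : ℝ → X,
          ConnectsInWithLength γ x y Set.univ (ENNReal.ofReal (L * dist x y))) := by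
  have hloc (z : X) := exists_ball_chainDistSup_le_mul_dist hμ z (hdbl z) (hPI z)
  refine ⟨fun x0 => ?_, fun _ _ x0 r0 _ => ?_⟩
  · obtain ⟨s, hs, L, hL, h⟩ := hloc x0
    obtain ⟨r0, hr0, hγ⟩ := exists_ball_forall_connectsInWithLength hs hL h
    exact ⟨r0, hr0, L, hL, hγ⟩
  · have hloc' : ∀ z : X, ∃ s > 0, ∃ L : ℝ, ∀ x ∈ ball z s, ∀ y ∈ ball z s,
        chainDistSup x y ≤ ENNReal.ofReal (L * dist x y) := fun z => by
      obtain ⟨s, hs, L, -, h⟩ := hloc z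
      exact ⟨s, hs, L, h⟩
    obtain ⟨L, hL, h⟩ := (isCompact_closedBall x0 r0).exists_le_mul_dist_of_locally_le
      chainDistSup_comm chainDistSup_triangle
      (ne_top_of_locally_le_mul_dist chainDistSup_comm chainDistSup_triangle hloc') hloc'
    refine ⟨L, hL, fun x hx y hy => ?_⟩
    exact exists_connectsInWithLength_of_chainDistSup_le (by positivity) (lt_add_one _)
      (isCompact_closedBall x _) (h x (ball_subset_closedBall hx) y (ball_subset_closedBall hy))

/-- If `X` is locally compact and `μ` is locally doubling and supports a local
`p`-Poincaré inequality, then `X` is locally quasiconvex; if `X` is moreover proper and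
connected, then `X` is semilocally quasiconvex. -/
theorem locally_and_semilocally_quasiconvex
    {X : Type*} [MetricSpace X] [MeasurableSpace X] [BorelSpace X] [LocallyCompactSpace X]
    (μ : Measure X) (hμ : BallsPosFinite μ) (p : ℝ) (hp : 1 ≤ p)
    (hdbl : ∀ x0 : X, ∃ r0 : ℝ, 0 < r0 ∧ ∃ C : ℝ≥0, DoublingWithin μ x0 r0 C)
    (hPI : ∀ x0 : X, ∃ r0 : ℝ, 0 < r0 ∧ ∃ C : ℝ, 0 < C ∧ ∃ lam : ℝ, 1 ≤ lam ∧
      PoincareWithin μ 1 p x0 r0 C lam) :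
    (∀ x0 : X, ∃ r0 : ℝ, 0 < r0 ∧ ∃ L : ℝ, 0 < L ∧
      ∀ x ∈ ball x0 r0, ∀ y ∈ ball x0 r0, ∃ γ : ℝ → X,
        ConnectsInWithLength γ x y Set.univ (ENNReal.ofReal (L * dist x y))) ∧
    (ProperSpace X → ConnectedSpace X →
      ∀ (x0 : X) (r0 : ℝ), 0 < r0 → ∃ L : ℝ, 0 < L ∧
        ∀ x ∈ ball x0 r0, ∀ y ∈ ball x0 r0, ∃ γ : ℝ → X,
          ConnectsInWithLength γ x y Set.univ (ENNReal.ofReal (L * dist x y))) :=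
  locally_and_semilocally_quasiconvex_general μ hμ p hdbl hPI
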